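/- Let q = 2, m ≥ 2, and work in S = F_2[x_1,x_2]. Let D = x_1^2 + x_1 x_2 + x_2^2 and for 0 ≤ k' ≤ 2^m - 2 define y_{k'} = ∑_{i=k'}^{2^m-2} x_1^{2^m-2+k'-i} x_2^{i}. Then in the quotient Q = F_2[x_1,x_2]/(x_1^{2^m}, x_2^{2^m}), one has D · y_{k'} = y_{k'+2} for all 0 ≤ k' ≤ 2^m - 4. -/
import Mathlib


open MvPolynomial Finset

/-- The ideal `(x_1^N, x_2^N)` in `F_2[x_1,x_2]`. -/
noncomputable def frobIdeal2 (N : ℕ) : Ideal (MvPolynomial (Fin 2) (ZMod 2)) :=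
  Ideal.span (Set.range fun i : Fin 2 => (MvPolynomial.X i : MvPolynomial (Fin 2) (ZMod 2)) ^ N)

/-- `y_{k'} = ∑_{i=k'}^{2^m-2} x_1^{2^m-2+k'-i} x_2^i` over `F_2`. -/
noncomputable def y2 (m k' : ℕ) : MvPolynomial (Fin 2) (ZMod 2) :=
  ∑ i ∈ Finset.Icc k' (2 ^ m - 2),
    MvPolynomial.X 0 ^ (2 ^ m - 2 + k' - i) * MvPolynomial.X 1 ^ i

lemma key (k n : ℕ) (hk : k ≤ n) :
    (X 0 + X 1 : MvPolynomial (Fin 2) (ZMod 2)) *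
      ∑ i ∈ Icc k n, X 0 ^ (n + k - i) * X 1 ^ i
    = X 0 ^ (n + 1) * X 1 ^ k + X 0 ^ k * X 1 ^ (n + 1) := by
  set f : ℕ → MvPolynomial (Fin 2) (ZMod 2) := fun i => X 0 ^ (n + k + 1 - i) * X 1 ^ i with hf
  have step : ∀ i ∈ Icc k n,
      (X 0 + X 1 : MvPolynomial (Fin 2) (ZMod 2)) * (X 0 ^ (n + k - i) * X 1 ^ i)
        = f i - f (i + 1) := by
    intro i hi
    simp only [mem_Icc] at hi
    have h1 : n + k + 1 - i = (n + k - i) + 1 := by omega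
    have h2 : n + k + 1 - (i + 1) = n + k - i := by omega
    rw [CharTwo.sub_eq_add, hf]
    simp only [h1, h2]
    ring
  rw [Finset.mul_sum, Finset.sum_congr rfl step]
  rw [← Finset.Ico_add_one_right_eq_Icc, Finset.sum_Ico_eq_sum_range]
  have h3 : n + 1 - k = (n - k) + 1 := by omega
  have heq : ∀ j, f (k + j) - f (k + j + 1) = (fun j => f (k + j)) j - (fun j => f (k + j)) (j + 1) := by
    intro j; simp [add_assoc]
  simp only [heq]
  rw [Finset.sum_range_sub' (fun j => f (k + j))]
  have h4 : k + (n + 1 - k) = n + 1 := by omega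
  have h5 : n + k + 1 - k = n + 1 := by omega
  have h6 : n + k + 1 - (n + 1) = k := by omega
  rw [CharTwo.sub_eq_add, hf]
  simp only [add_zero, h4, h5, h6]

lemma Xne : (X 0 + X 1 : MvPolynomial (Fin 2) (ZMod 2)) ≠ 0 := by
  intro h
  have := congrArg (coeff (Finsupp.single 0 1)) h
  simp [coeff_X', Finsupp.single_eq_single_iff] at this

/-- over `F_2`, with `D = x_1² + x_1x_2 + x_2²` the Dickson invariant, in
`Q = F_2[x_1,x_2]/(x_1^{2^m}, x_2^{2^m})` one has `D·y_{k'} = y_{k'+2}` for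
`0 ≤ k' ≤ 2^m - 4`. -/
theorem statement17 (m : ℕ) (hm : 2 ≤ m) (k' : ℕ) (hk' : k' ≤ 2 ^ m - 4) :
    Ideal.Quotient.mk (frobIdeal2 (2 ^ m))
        ((MvPolynomial.X 0 ^ 2 + MvPolynomial.X 0 * MvPolynomial.X 1 +
            MvPolynomial.X 1 ^ 2) * y2 m k')
      = Ideal.Quotient.mk (frobIdeal2 (2 ^ m)) (y2 m (k' + 2)) := by
  have hN : 4 ≤ 2 ^ m := by calc 4 = 2 ^ 2 := rfl
                                 _ ≤ 2 ^ m := Nat.pow_le_pow_right (by norm_num) hm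
  obtain ⟨a, ha⟩ : ∃ a, 2 ^ m = a + 4 := ⟨2 ^ m - 4, by omega⟩
  have hk2 : k' + 2 ≤ 2 ^ m - 2 := by omega
  set D : MvPolynomial (Fin 2) (ZMod 2) := X 0 ^ 2 + X 0 * X 1 + X 1 ^ 2 with hD
  have key1 := key k' (2 ^ m - 2) (by omega)
  have key2 := key (k' + 2) (2 ^ m - 2) (by omega)
  have hn1 : 2 ^ m - 2 + 1 = a + 3 := by omega
  have P : D * y2 m k' = y2 m (k' + 2) + (X 0 ^ (2 ^ m) * X 1 ^ k' + X 0 ^ k' * X 1 ^ (2 ^ m)) := by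
    apply mul_left_cancel₀ Xne
    rw [show (X 0 + X 1 : MvPolynomial (Fin 2) (ZMod 2)) * (D * y2 m k')
          = D * ((X 0 + X 1) * y2 m k') by ring]
    rw [mul_add, y2, key1]
    rw [show (X 0 + X 1 : MvPolynomial (Fin 2) (ZMod 2)) * y2 m (k' + 2)
          = (X 0 + X 1) * ∑ i ∈ Icc (k' + 2) (2 ^ m - 2), X 0 ^ (2 ^ m - 2 + (k' + 2) - i) * X 1 ^ i from by rw [y2], key2]
    rw [hn1, ha, hD]
    ring
  rw [Ideal.Quotient.eq, P]
  rw [add_sub_cancel_left]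
  apply Ideal.add_mem
  · exact Ideal.mul_mem_right _ _ (Ideal.subset_span ⟨0, rfl⟩)
  · exact Ideal.mul_mem_left _ _ (Ideal.subset_span ⟨1, rfl⟩)
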